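/- The constraint simplification rules (Trans), (Dec), (Glb), (Lub) for flat subtype constraints over a lattice of constructors terminate: no rule increases the temperature t, and each rule application strictly decreases the lexicographic measure (t, e), where e = 2^v − n with v the number of parameters and n the number of inequalities between parameters, and t is the sum of heights of constructors on the right of ≤ plus depths of constructors on the left of ≤. -/

import Mathlib

/-- Signature of type constructors forming a lattice, with arity-decreasing
order and compatible injective argument mappings. -/
structure LSig (K : Type) [Lattice K] where
  ar : K → ℕ
  ar_anti : ∀ {a b : K}, a ≤ b → ar b ≤ ar a
  iota : K → K → ℕ → ℕ
  iota_lt : ∀ {a b : K}, a ≤ b → ∀ {i}, i < ar b → iota a b i < ar a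
  iota_inj : ∀ {a b : K}, a ≤ b → ∀ {i j}, i < ar b → j < ar b →
    iota a b i = iota a b j → i = j
  iota_id : ∀ k i, iota k k i = i
  iota_comp : ∀ {a b c : K}, a ≤ b → b ≤ c → ∀ {i}, i < ar c →
    iota a c i = iota a b (iota b c i)

/-- Flat subtype constraints between parameters `P` and flat types:
`α ≤ β`, `K(α₁,…,αₙ) ≤ α`, or `α ≤ K(α₁,…,αₙ)`. -/
inductive FC (K P : Type) : Type
  | vv : P → P → FC K P
  | cv : K → List P → P → FC K P
  | vc : P → K → List P → FC K P
deriving DecidableEq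

variable {K P : Type} [Lattice K] [DecidableEq K] [DecidableEq P] [Inhabited P]

/-- Residual parameter inequalities posted by rule (Dec). -/
def residDec (S : LSig K) (k k' : K) (as as' : List P) : Finset (FC K P) :=
  (Finset.range (S.ar k')).image
    (fun j => FC.vv (as.getD (S.iota k k' j) default) (as'.getD j default))

/-- Residual parameter inequalities posted by rule (Glb): components of the two
upper bounds that share a slot of the glb constructor are compared. -/
def residGlb (S : LSig K) (k k' : K) (as as' : List P) : Finset (FC K P) :=
  (((Finset.range (S.ar k)) ×ˢ (Finset.range (S.ar k'))).filter
      (fun p => S.iota (k ⊓ k') k p.1 = S.iota (k ⊓ k') k' p.2)).image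
    (fun p => FC.vv (as.getD p.1 default) (as'.getD p.2 default))

/-- Residual parameter inequalities posted by rule (Lub). -/
def residLub (S : LSig K) (k k' : K) (as as' : List P) : Finset (FC K P) :=
  (Finset.range (S.ar (k ⊔ k'))).image
    (fun j => FC.vv (as.getD (S.iota k (k ⊔ k') j) default)
      (as'.getD (S.iota k' (k ⊔ k') j) default))

/-- The constraint simplification rules (Trans), (Dec), (Glb), (Lub). -/
inductive StepL (S : LSig K) : Finset (FC K P) → Finset (FC K P) → Prop
  | trans {E : Finset (FC K P)} {α β γ : P} :
      FC.vv α β ∈ E → FC.vv β γ ∈ E → FC.vv α γ ∉ E → α ≠ γ →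
      StepL S E (insert (FC.vv α γ) E)
  | dec {E : Finset (FC K P)} {k k' : K} {as as' : List P} {α : P} :
      FC.cv k as α ∈ E → FC.vc α k' as' ∈ E → k ≤ k' →
      as.length = S.ar k → as'.length = S.ar k' →
      ¬ residDec S k k' as as' ⊆ E →
      StepL S E (E ∪ residDec S k k' as as')
  | glb {E : Finset (FC K P)} {α β : P} {k k' : K} {as as' cs : List P} :
      FC.vv α β ∈ E → FC.vc α k as ∈ E → FC.vc β k' as' ∈ E →
      as.length = S.ar k → as'.length = S.ar k' → cs.length = S.ar (k ⊓ k') →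
      (∀ i, i < S.ar k → cs.getD (S.iota (k ⊓ k') k i) default = as.getD i default) →
      (∀ j, j < S.ar k' → (∀ i, i < S.ar k →
          S.iota (k ⊓ k') k i ≠ S.iota (k ⊓ k') k' j) →
        cs.getD (S.iota (k ⊓ k') k' j) default = as'.getD j default) →
      (k ⊓ k' ≠ k ∨ ¬ residGlb S k k' as as' ⊆ E) →
      StepL S E (insert (FC.vc α (k ⊓ k') cs)
        ((E.erase (FC.vc α k as)) ∪ residGlb S k k' as as'))
  | lub {E : Finset (FC K P)} {α β : P} {k k' : K} {as as' cs : List P} :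
      FC.vv α β ∈ E → FC.cv k as α ∈ E → FC.cv k' as' β ∈ E →
      as.length = S.ar k → as'.length = S.ar k' → cs.length = S.ar (k ⊔ k') →
      (∀ j, j < S.ar (k ⊔ k') →
        cs.getD j default = as'.getD (S.iota k' (k ⊔ k') j) default) →
      (k ⊔ k' ≠ k' ∨ ¬ residLub S k k' as as' ⊆ E) →
      StepL S E (insert (FC.cv (k ⊔ k') cs β)
        ((E.erase (FC.cv k' as' β)) ∪ residLub S k k' as as'))

/-- The height of a constructor: its distance to ⊥ in the lattice `K`. -/
noncomputable def htK (k : K) : ℕ := (Order.height k).toNat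

/-- The depth of a constructor: its distance to ⊤ in the lattice `K`. -/
noncomputable def dpK (k : K) : ℕ := (Order.coheight k).toNat

/-- The temperature of a system: the sum of the heights of the constructors on
the right of ≤ plus the depths of the constructors on the left of ≤. -/
noncomputable def tMeas (E : Finset (FC K P)) : ℕ :=
  E.sum (fun c => match c with
    | .vv _ _ => 0
    | .vc _ k _ => htK k
    | .cv k _ _ => dpK k)

/-- Whether a constraint is an inequality between parameters. -/
def FC.isVV : FC K P → Bool
  | .vv _ _ => true
  | _ => false

/-- The entropy of a system: `2^v − n`, `v` the number of parameters and `n`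
the number of inequalities between parameters. -/
def eMeas [Fintype P] (E : Finset (FC K P)) : ℤ :=
  2 ^ (Fintype.card P) - (E.filter (fun c => c.isVV)).card
/-! Temperature can only drop: (Trans) and (Dec) add only parameter inequalities, which carry no
temperature, while a proper (Glb) or (Lub) step replaces a bound by a strictly lower (resp.
higher) constructor, whose height (resp. depth) is strictly smaller. When temperature stays
put, the step adds at least one new parameter inequality, so the entropy drops. There are at
most `|P|²` parameter inequalities, so `(t, |P|² - n)` descends in the well-founded order
`ℕ ×ₗ ℕ`, and no infinite run exists. -/

theorem ENat.toNat_lt_toNat_of_lt {m n : ℕ∞} (h : m < n) (hn : n ≠ ⊤) : m.toNat < n.toNat := by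
  lift n to ℕ using hn
  lift m to ℕ using h.ne_top
  exact_mod_cast h

theorem Order.height_lt_top_of_fintype {α : Type*} [Preorder α] [Fintype α] (a : α) :
    Order.height a < ⊤ :=
  (Order.height_le fun p _ => mod_cast p.length_lt_card.le).trans_lt (ENat.natCast_lt_top _)

theorem Order.coheight_lt_top_of_fintype {α : Type*} [Preorder α] [Fintype α] (a : α) :
    Order.coheight a < ⊤ :=
  Order.height_lt_top_of_fintype (OrderDual.toDual a)

theorem List.eq_of_getD_eq {α : Type*} {l l' : List α} (d : α) (hlen : l.length = l'.length)
    (h : ∀ i < l'.length, l.getD i d = l'.getD i d) : l = l' :=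
  List.ext_getElem hlen fun i hi hi' => by
    rw [← List.getD_eq_getElem _ d hi, ← List.getD_eq_getElem _ d hi', h i hi']

section

omit [DecidableEq K] [DecidableEq P] [Inhabited P]

theorem htK_strictMono [Fintype K] : StrictMono (htK : K → ℕ) := fun _ _ h =>
  ENat.toNat_lt_toNat_of_lt (Order.height_strictMono h (Order.height_lt_top_of_fintype _))
    (Order.height_lt_top_of_fintype _).ne

theorem dpK_strictAnti [Fintype K] : StrictAnti (dpK : K → ℕ) := fun _ _ h =>
  ENat.toNat_lt_toNat_of_lt (Order.coheight_strictAnti h (Order.coheight_lt_top_of_fintype _))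
    (Order.coheight_lt_top_of_fintype _).ne

namespace FC

noncomputable def temp : FC K P → ℕ
  | .vv _ _ => 0
  | .vc _ k _ => htK k
  | .cv k _ _ => dpK k

theorem temp_eq_zero_of_isVV {c : FC K P} (h : c.isVV) : c.temp = 0 := by
  cases c <;> simp_all [isVV, temp]

end FC

theorem tMeas_eq_sum_temp (E : Finset (FC K P)) : tMeas E = ∑ c ∈ E, c.temp :=
  Finset.sum_congr rfl fun c _ => by cases c <;> rfl

end

section

omit [Lattice K] [Inhabited P]

theorem FC.isVV_of_mem_image {ι : Type} (s : Finset ι) (f g : ι → P) {c : FC K P}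
    (hc : c ∈ s.image fun i => FC.vv (f i) (g i)) : c.isVV := by
  obtain ⟨i, -, rfl⟩ := Finset.mem_image.mp hc
  rfl

def vvCard (E : Finset (FC K P)) : ℕ := (E.filter fun c => c.isVV).card

theorem vvCard_le_sq [Fintype P] (E : Finset (FC K P)) : vvCard E ≤ Fintype.card P ^ 2 := by
  have hsub : E.filter (fun c => c.isVV) ⊆
      (Finset.univ : Finset (P × P)).image fun p => FC.vv p.1 p.2 := by
    intro c hc
    obtain ⟨-, hc⟩ := Finset.mem_filter.mp hc
    cases c with
    | vv a b => exact Finset.mem_image.mpr ⟨(a, b), Finset.mem_univ _, rfl⟩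
    | _ => exact absurd hc Bool.false_ne_true
  calc vvCard E ≤ ((Finset.univ : Finset (P × P)).image fun p => FC.vv p.1 p.2).card :=
        Finset.card_le_card hsub
    _ ≤ Fintype.card (P × P) := Finset.card_image_le
    _ = Fintype.card P ^ 2 := by rw [Fintype.card_prod, sq]

theorem vvCard_lt_union {E R : Finset (FC K P)} (hR : ∀ c ∈ R, c.isVV) (hRE : ¬ R ⊆ E) :
    vvCard E < vvCard (E ∪ R) := by
  obtain ⟨r, hr, hrE⟩ := Finset.not_subset.mp hRE
  refine Finset.card_lt_card ((Finset.ssubset_iff_of_subset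
    (Finset.filter_subset_filter _ Finset.subset_union_left)).mpr ?_)
  exact ⟨r, Finset.mem_filter.mpr ⟨Finset.mem_union_right _ hr, hR r hr⟩,
    fun h => hrE (Finset.mem_filter.mp h).1⟩

end

section

omit [Inhabited P]

theorem tMeas_union_of_isVV {E R : Finset (FC K P)} (hR : ∀ c ∈ R, c.isVV) :
    tMeas (E ∪ R) = tMeas E := by
  rw [tMeas_eq_sum_temp, tMeas_eq_sum_temp, ← Finset.union_sdiff_self_eq_union,
    Finset.sum_union Finset.disjoint_sdiff, Nat.add_eq_left]
  exact Finset.sum_eq_zero fun c hc => FC.temp_eq_zero_of_isVV (hR c (Finset.mem_sdiff.mp hc).1)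

theorem tMeas_insert_erase_union_lt {E R : Finset (FC K P)} {c d : FC K P} (hd : d ∈ E)
    (hcd : c.temp < d.temp) (hR : ∀ c ∈ R, c.isVV) :
    tMeas (insert c (E.erase d ∪ R)) < tMeas E := by
  have hle : tMeas (insert c (E.erase d ∪ R)) ≤ c.temp + tMeas (E.erase d ∪ R) := by
    by_cases hc : c ∈ E.erase d ∪ R
    · rw [Finset.insert_eq_of_mem hc]
      exact Nat.le_add_left _ _
    · rw [tMeas_eq_sum_temp, tMeas_eq_sum_temp, Finset.sum_insert hc]
  calc tMeas (insert c (E.erase d ∪ R)) ≤ c.temp + tMeas (E.erase d) := by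
        rwa [tMeas_union_of_isVV hR] at hle
    _ < d.temp + tMeas (E.erase d) := by omega
    _ = tMeas E := by rw [tMeas_eq_sum_temp, tMeas_eq_sum_temp, Finset.add_sum_erase _ _ hd]

def Descends (E E' : Finset (FC K P)) : Prop :=
  tMeas E' < tMeas E ∨ tMeas E' = tMeas E ∧ vvCard E < vvCard E'

theorem descends_union_of_isVV {E R : Finset (FC K P)} (hR : ∀ c ∈ R, c.isVV)
    (hRE : ¬ R ⊆ E) : Descends E (E ∪ R) :=
  Or.inr ⟨tMeas_union_of_isVV hR, vvCard_lt_union hR hRE⟩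

end

theorem StepL.descends [Fintype K] {S : LSig K} {E E' : Finset (FC K P)} (h : StepL S E E') :
    Descends E E' := by
  cases h with
  | trans _ _ hnew _ =>
    rw [← Finset.union_singleton]
    exact descends_union_of_isVV (by simp [FC.isVV]) (by simpa using hnew)
  | dec _ _ _ _ _ hnew =>
    exact descends_union_of_isVV (fun _ => FC.isVV_of_mem_image _ _ _) hnew
  | @glb _ _ k k' as as' cs _ has _ hlen _ hlen' hcs _ hproper =>
    have hR : ∀ c ∈ residGlb S k k' as as', c.isVV := fun _ => FC.isVV_of_mem_image _ _ _
    by_cases hk : k ⊓ k' = k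
    -- the upper bound of `α` is unchanged, so the step only posts the residuals
    · obtain rfl : cs = as := List.eq_of_getD_eq default (by rw [hlen', hk, hlen])
        fun i hi => by simpa [hk, S.iota_id] using hcs i (hlen ▸ hi)
      rw [hk, ← Finset.insert_union, Finset.insert_erase has]
      exact descends_union_of_isVV hR (hproper.resolve_left (not_not.mpr hk))
    · exact Or.inl (tMeas_insert_erase_union_lt has
        (htK_strictMono (inf_le_left.lt_of_ne hk)) hR)
  | @lub _ _ k k' as as' cs _ _ has' _ hlen hlen' hcs hproper =>
    have hR : ∀ c ∈ residLub S k k' as as', c.isVV := fun _ => FC.isVV_of_mem_image _ _ _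
    by_cases hk : k ⊔ k' = k'
    · obtain rfl : cs = as' := List.eq_of_getD_eq default (by rw [hlen', hk, hlen])
        fun j hj => by simpa [hk, S.iota_id] using hcs j (by rw [hk, ← hlen]; exact hj)
      rw [hk, ← Finset.insert_union, Finset.insert_erase has']
      exact descends_union_of_isVV hR (hproper.resolve_left (not_not.mpr hk))
    · exact Or.inl (tMeas_insert_erase_union_lt has'
        (dpK_strictAnti (le_sup_right.lt_of_ne' hk)) hR)

/-- the rules (Trans), (Dec), (Glb), (Lub) never increase the
temperature `t`, strictly decrease the lexicographic measure `(t, e)`, and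
hence terminate. -/
theorem lattice_rules_terminate [Fintype K] [Fintype P] (S : LSig K) :
    (∀ E E' : Finset (FC K P), StepL S E E' →
      tMeas E' ≤ tMeas E ∧
      Prod.Lex (· < ·) (· < ·) ((tMeas E' : ℕ), eMeas E') (tMeas E, eMeas E)) ∧
    ¬ ∃ f : ℕ → Finset (FC K P), ∀ i, StepL S (f i) (f (i + 1)) := by
  refine ⟨fun E E' h => ?_, fun ⟨f, hf⟩ => ?_⟩
  · rcases h.descends with ht | ⟨ht, hn⟩
    · exact ⟨ht.le, .left _ _ ht⟩
    · exact ⟨ht.le, ht ▸ .right _ (sub_lt_sub_left (mod_cast hn) _)⟩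
  · let μ : Finset (FC K P) → ℕ ×ₗ ℕ := fun E => toLex (tMeas E, Fintype.card P ^ 2 - vvCard E)
    refine not_strictAnti_of_wellFoundedLT (μ ∘ f) (strictAnti_nat_of_succ_lt fun i => ?_)
    have hbound := vvCard_le_sq (f (i + 1))
    rw [Function.comp_apply, Function.comp_apply, Prod.Lex.toLex_lt_toLex]
    rcases (hf i).descends with ht | ⟨ht, hn⟩
    · exact Or.inl ht
    · exact Or.inr ⟨ht, by omega⟩
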